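/- Let M be an n × m random matrix (n ≤ m) with jointly independent complex entries of zero mean and unit variance. Then E[det(ε I_n + (1/m) M M*)] ≥ m!/((m−n)! m^n) for every ε ≥ 0. -/

import Mathlib

/-!
Expanding in principal minors, `det (ε • 1 + m⁻¹ • M Mᴴ) = ∑ₛ ε ^ |sᶜ| m ^ (-|s|) det (Mₛ Mₛᴴ)`,
where `Mₛ` consists of the rows of `M` indexed by `s`. So it suffices that
`E[det (N Nᴴ)] = (card κ)(card κ - 1)⋯(card κ - card ι + 1)` for every matrix `N` with independent
standardized entries: then every term has nonnegative expectation and the term `s = univ` is the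
bound. Expand `det (N Nᴴ)` over column choices `f : ι ↪ κ` (a non-injective choice repeats a
column) and permutations `σ`; by independence the expectation of
`∏ᵢ N i (f (σ⁻¹ i)) conj (N i (f i))` is `1` if `σ = 1` and `0` otherwise, so each embedding
contributes exactly `1`.
-/

open MeasureTheory ProbabilityTheory Matrix

open scoped ComplexConjugate

theorem ProbabilityTheory.iIndepFun.integrable_fun_prod {Ω ι 𝕜 : Type*} [Fintype ι] [RCLike 𝕜]
    [MeasurableSpace Ω] {μ : Measure Ω} {X : ι → Ω → 𝕜}
    (hX : iIndepFun X μ) (hmeas : ∀ i, Measurable (X i)) (hint : ∀ i, Integrable (X i) μ) :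
    Integrable (fun ω => ∏ i, X i ω) μ := by
  refine ⟨Finset.aestronglyMeasurable_fun_prod _ fun i _ => (hint i).1, ?_⟩
  have hind : iIndepFun (fun i ω => ‖X i ω‖ₑ) μ :=
    hX.comp (fun _ x => ‖x‖ₑ) fun _ => measurable_enorm
  calc ∫⁻ ω, ‖∏ i, X i ω‖ₑ ∂μ = ∫⁻ ω, ∏ i, ‖X i ω‖ₑ ∂μ := by
        simp only [enorm_eq_nnnorm, nnnorm_prod, ENNReal.ofNNReal_finsetProd]
    _ = ∏ i, ∫⁻ ω, ‖X i ω‖ₑ ∂μ :=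
        lintegral_prod_eq_prod_lintegral_of_indepFun _ _ hind fun i => (hmeas i).enorm
    _ < ⊤ := ENNReal.prod_lt_top fun i _ => (hint i).2

namespace Matrix

variable {ι κ R : Type*} [CommRing R]

theorem det_smul_one_add_eq_sum_minors [Fintype ι] [DecidableEq ι] (r : R) (A : Matrix ι ι R) :
    det (r • 1 + A) = ∑ s : Finset ι, r ^ sᶜ.card * (A.submatrix (↑) (↑) : Matrix s s R).det := by
  rw [add_comm]
  change detRowAlternating (A.row + (r • 1 : Matrix ι ι R).row) = _
  rw [AlternatingMap.map_add_univ]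
  refine Finset.sum_congr rfl fun s _ => ?_
  have h : s.piecewise A.row (r • 1 : Matrix ι ι R).row =
      fun i => (if i ∈ sᶜ then r else 1) • s.piecewise A.row (1 : Matrix ι ι R).row i := by
    funext i j
    by_cases hi : i ∈ s <;> simp [Finset.piecewise, hi, Matrix.row]
  rw [h, AlternatingMap.map_smul_univ, ← det_piecewise_one_eq_submatrix_det, Finset.prod_ite_mem,
    Finset.univ_inter, Finset.prod_const]
  rfl

variable [Fintype κ] [StarRing R]

theorem submatrix_mul_conjTranspose {ι' : Type*} (N : Matrix ι κ R) (e : ι' → ι) :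
    (N * Nᴴ).submatrix e e = N.submatrix e id * (N.submatrix e id)ᴴ := by
  ext i j
  simp [mul_apply]

variable [Fintype ι] [DecidableEq ι]

theorem det_mul_conjTranspose_eq_sum_det_submatrix (N : Matrix ι κ R) :
    det (N * Nᴴ) = ∑ f : ι → κ, det (N.submatrix id f) * ∏ i, star (N i (f i)) := by
  simp only [det_apply', mul_apply, conjTranspose_apply, Fintype.prod_sum, Finset.mul_sum,
    submatrix_apply, id, Finset.sum_mul, Finset.prod_mul_distrib]
  rw [Finset.sum_comm]
  simp only [mul_assoc]

theorem det_mul_conjTranspose_eq_sum_embedding (N : Matrix ι κ R) :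
    det (N * Nᴴ) = ∑ f : ι ↪ κ, ∑ σ : Equiv.Perm ι,
      (Equiv.Perm.sign σ : R) * ∏ i, N i (f (σ.symm i)) * star (N i (f i)) := by
  classical
  rw [det_mul_conjTranspose_eq_sum_det_submatrix, ← Finset.sum_filter_of_ne
    (p := Function.Injective) fun f _ hf => by_contra fun hinj => hf ?_]
  · rw [Finset.sum_subtype (p := Function.Injective) _ (fun f => by simp),
      ← (Equiv.subtypeInjectiveEquivEmbedding ι κ).sum_comp]
    refine Fintype.sum_congr _ _ fun f => ?_
    rw [det_apply', Finset.sum_mul]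
    refine Fintype.sum_congr _ _ fun σ => ?_
    rw [mul_assoc, ← Equiv.prod_comp σ.symm (fun i => (N.submatrix id f) (σ i) i),
      ← Finset.prod_mul_distrib]
    simp only [submatrix_apply, id, Equiv.apply_symm_apply]
    rfl
  · obtain ⟨i, j, hij, hne⟩ := Function.not_injective_iff.mp hinj
    rw [det_zero_of_column_eq hne fun k => by simp [hij], zero_mul]

end Matrix

/-- The contribution of the entry `z = A i k` to `A i (g i) * conj (A i (f i))`; splitting a row
product into these factors makes it a product of independent random variables. -/
def entryFactor (a b : Prop) [Decidable a] [Decidable b] (z : ℂ) : ℂ :=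
  (if a then z else 1) * (if b then conj z else 1)

theorem measurable_entryFactor (a b : Prop) [Decidable a] [Decidable b] :
    Measurable (entryFactor a b) := by
  unfold entryFactor
  split_ifs <;> fun_prop

theorem prod_mul_conj_eq_prod_entryFactor {ι κ : Type*} [Fintype ι] [Fintype κ] [DecidableEq κ]
    (A : Matrix ι κ ℂ) (g f : ι → κ) :
    ∏ i, A i (g i) * conj (A i (f i)) =
      ∏ p : ι × κ, entryFactor (g p.1 = p.2) (f p.1 = p.2) (A p.1 p.2) := by
  simp only [entryFactor, Fintype.prod_prod_type, Finset.prod_mul_distrib, Finset.prod_ite_eq,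
    Finset.mem_univ, if_true]

structure HasIndepStdEntries {Ω ι κ : Type*} [MeasurableSpace Ω] (μ : Measure Ω)
    (M : Ω → Matrix ι κ ℂ) : Prop where
  measurable : ∀ i j, Measurable fun ω => M ω i j
  indep : iIndepFun (fun (p : ι × κ) ω => M ω p.1 p.2) μ
  integral_eq_zero : ∀ i j, ∫ ω, M ω i j ∂μ = 0
  integral_norm_sq : ∀ i j, ∫ ω, ‖M ω i j‖ ^ 2 ∂μ = 1

namespace HasIndepStdEntries

variable {Ω ι κ : Type*} [MeasurableSpace Ω] {μ : Measure Ω} {M : Ω → Matrix ι κ ℂ}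

theorem submatrix {ι' κ' : Type*} (hM : HasIndepStdEntries μ M) {e : ι' → ι} {e' : κ' → κ}
    (he : e.Injective) (he' : e'.Injective) :
    HasIndepStdEntries μ fun ω => (M ω).submatrix e e' where
  measurable i j := hM.measurable (e i) (e' j)
  indep := hM.indep.precomp (g := Prod.map e e') (he.prodMap he')
  integral_eq_zero i j := hM.integral_eq_zero (e i) (e' j)
  integral_norm_sq i j := hM.integral_norm_sq (e i) (e' j)

theorem integrable_norm_sq (hM : HasIndepStdEntries μ M) (i : ι) (j : κ) :
    Integrable (fun ω => ‖M ω i j‖ ^ 2) μ := by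
  by_contra h
  simpa [integral_undef h] using hM.integral_norm_sq i j

theorem integral_mul_conj (hM : HasIndepStdEntries μ M) (i : ι) (j : κ) :
    ∫ ω, M ω i j * conj (M ω i j) ∂μ = 1 := by
  simp_rw [Complex.mul_conj, Complex.normSq_eq_norm_sq]
  rw [integral_complex_ofReal, hM.integral_norm_sq, Complex.ofReal_one]

variable [IsProbabilityMeasure μ]

theorem integrable (hM : HasIndepStdEntries μ M) (i : ι) (j : κ) :
    Integrable (fun ω => M ω i j) μ :=
  ((memLp_two_iff_integrable_sq_norm (hM.measurable i j).aestronglyMeasurable).mpr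
    (hM.integrable_norm_sq i j)).integrable one_le_two

theorem integrable_entryFactor (hM : HasIndepStdEntries μ M) (i : ι) (j : κ)
    (a b : Prop) [Decidable a] [Decidable b] :
    Integrable (fun ω => entryFactor a b (M ω i j)) μ := by
  unfold entryFactor
  by_cases ha : a <;> by_cases hb : b <;> simp only [ha, hb, if_true, if_false, mul_one, one_mul]
  · simp_rw [Complex.mul_conj, Complex.normSq_eq_norm_sq]
    exact (hM.integrable_norm_sq i j).ofReal
  · exact hM.integrable i j
  · exact (Complex.conjCLE : ℂ →L[ℝ] ℂ).integrable_comp (hM.integrable i j)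
  · exact integrable_const 1

theorem integral_entryFactor (hM : HasIndepStdEntries μ M) (i : ι) (j : κ)
    (a b : Prop) [Decidable a] [Decidable b] :
    ∫ ω, entryFactor a b (M ω i j) ∂μ = if (a ↔ b) then 1 else 0 := by
  unfold entryFactor
  by_cases ha : a <;> by_cases hb : b <;>
    simp [ha, hb, hM.integral_mul_conj, hM.integral_eq_zero, integral_conj]

variable [Fintype ι] [Fintype κ] [DecidableEq κ]

theorem integrable_prod_mul_conj (hM : HasIndepStdEntries μ M) (g f : ι → κ) :
    Integrable (fun ω => ∏ i, M ω i (g i) * conj (M ω i (f i))) μ := by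
  simp_rw [prod_mul_conj_eq_prod_entryFactor]
  exact (hM.indep.comp _ fun p => measurable_entryFactor _ _).integrable_fun_prod
    (fun p => (measurable_entryFactor _ _).comp (hM.measurable p.1 p.2))
    fun p => hM.integrable_entryFactor p.1 p.2 _ _

theorem integral_prod_mul_conj (hM : HasIndepStdEntries μ M) (g f : ι → κ) :
    ∫ ω, ∏ i, M ω i (g i) * conj (M ω i (f i)) ∂μ = if g = f then 1 else 0 := by
  simp_rw [prod_mul_conj_eq_prod_entryFactor]
  rw [hM.indep.integral_fun_prod_comp (f := fun p => entryFactor (g p.1 = p.2) (f p.1 = p.2))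
    (fun p => (hM.measurable p.1 p.2).aemeasurable)
    fun p => (measurable_entryFactor _ _).aestronglyMeasurable]
  simp_rw [hM.integral_entryFactor, Finset.prod_boole]
  congr 1
  simp only [Finset.mem_univ, true_implies, Prod.forall, funext_iff, eq_iff_iff]
  exact ⟨fun h i => (h i (f i)).2 rfl, fun h i k => by rw [h i]⟩

variable [DecidableEq ι]

theorem integrable_det_mul_conjTranspose (hM : HasIndepStdEntries μ M) :
    Integrable (fun ω => det (M ω * (M ω)ᴴ)) μ := by
  simp_rw [det_mul_conjTranspose_eq_sum_embedding, Complex.star_def]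
  exact integrable_finsetSum _ fun f _ => integrable_finsetSum _ fun σ _ =>
    (hM.integrable_prod_mul_conj _ f).const_mul _

theorem integral_det_mul_conjTranspose (hM : HasIndepStdEntries μ M) :
    ∫ ω, det (M ω * (M ω)ᴴ) ∂μ = (Fintype.card κ).descFactorial (Fintype.card ι) := by
  have hint (f : ι ↪ κ) (σ : Equiv.Perm ι) : Integrable (fun ω =>
      (Equiv.Perm.sign σ : ℂ) * ∏ i, M ω i (f (σ.symm i)) * conj (M ω i (f i))) μ :=
    (hM.integrable_prod_mul_conj _ f).const_mul _
  have hfix (f : ι ↪ κ) (σ : Equiv.Perm ι) : (fun i => f (σ.symm i)) = f ↔ σ = 1 := by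
    refine ⟨fun h => ?_, fun h => by subst h; rfl⟩
    rw [← inv_eq_one]
    exact Equiv.ext fun i => f.injective (congrFun h i)
  simp_rw [det_mul_conjTranspose_eq_sum_embedding, Complex.star_def]
  rw [integral_finsetSum _ fun f _ => integrable_finsetSum _ fun σ _ => hint f σ]
  simp_rw [integral_finsetSum _ fun σ _ => hint _ σ, integral_const_mul,
    hM.integral_prod_mul_conj, hfix]
  simp [Fintype.card_embedding_eq]

theorem integral_det_smul_one_add_smul_mul_conjTranspose (hM : HasIndepStdEntries μ M)
    (ε c : ℂ) :
    ∫ ω, det (ε • 1 + c • (M ω * (M ω)ᴴ)) ∂μ =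
      ∑ s : Finset ι, ε ^ sᶜ.card * c ^ s.card * (Fintype.card κ).descFactorial s.card := by
  have hs (s : Finset ι) : HasIndepStdEntries μ fun ω => (M ω).submatrix ((↑) : s → ι) id :=
    hM.submatrix Subtype.val_injective Function.injective_id
  have hminors (ω : Ω) : det (ε • 1 + c • (M ω * (M ω)ᴴ)) = ∑ s : Finset ι, ε ^ sᶜ.card *
      (c ^ s.card * det ((M ω).submatrix (↑) id * ((M ω).submatrix ((↑) : s → ι) id)ᴴ)) := by
    rw [det_smul_one_add_eq_sum_minors]
    refine Finset.sum_congr rfl fun s _ => ?_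
    rw [submatrix_smul, Pi.smul_apply, Pi.smul_apply, submatrix_mul_conjTranspose, det_smul,
      Fintype.card_coe]
  simp_rw [hminors]
  rw [integral_finsetSum _ fun s _ =>
    ((hs s).integrable_det_mul_conjTranspose.const_mul _).const_mul _]
  refine Finset.sum_congr rfl fun s _ => ?_
  rw [integral_const_mul, integral_const_mul, (hs s).integral_det_mul_conjTranspose,
    Fintype.card_coe, mul_assoc]

end HasIndepStdEntries

theorem stmt_7 {Ω : Type*} [MeasurableSpace Ω] (μ : Measure Ω) [IsProbabilityMeasure μ]
    (n m : ℕ) (hnm : n ≤ m)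
    (M : Ω → Matrix (Fin n) (Fin m) ℂ)
    (hmeas : ∀ i j, Measurable (fun ω => M ω i j))
    (hindep : iIndepFun
      (fun (p : Fin n × Fin m) ω => M ω p.1 p.2) μ)
    (hmean : ∀ i j, ∫ ω, M ω i j ∂μ = 0)
    (hvar : ∀ i j, ∫ ω, ‖M ω i j‖ ^ 2 ∂μ = 1) :
    ∀ ε : ℝ, 0 ≤ ε →
      (m.factorial : ℝ) / ((m - n).factorial * (m : ℝ) ^ n)
        ≤ (∫ ω, ((ε : ℂ) • (1 : Matrix (Fin n) (Fin n) ℂ)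
              + ((m : ℂ))⁻¹ • (M ω * (M ω)ᴴ)).det ∂μ).re := by
  intro ε hε
  have hM : HasIndepStdEntries μ M := ⟨hmeas, hindep, hmean, hvar⟩
  set term : Finset (Fin n) → ℝ := fun s =>
    ε ^ sᶜ.card * (m : ℝ)⁻¹ ^ s.card * m.descFactorial s.card
  have hsum : ∫ ω, ((ε : ℂ) • (1 : Matrix (Fin n) (Fin n) ℂ)
      + ((m : ℂ))⁻¹ • (M ω * (M ω)ᴴ)).det ∂μ = ((∑ s, term s : ℝ) : ℂ) := by
    rw [hM.integral_det_smul_one_add_smul_mul_conjTranspose]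
    push_cast [term]
    simp only [Fintype.card_fin]
  rw [hsum, Complex.ofReal_re]
  calc (m.factorial : ℝ) / ((m - n).factorial * (m : ℝ) ^ n) = term Finset.univ := by
        rw [← Nat.factorial_mul_descFactorial hnm, Nat.cast_mul,
          mul_div_mul_left _ _ (by positivity)]
        simp [term, div_eq_inv_mul]
    _ ≤ ∑ s, term s := Finset.single_le_sum (fun s _ => by positivity) (Finset.mem_univ _)
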